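/- Let n, m, l be natural numbers with n + m + l odd. Then I_{n,m,l,1} = −(n+m−l−2)‼ · (n−m+l−2)‼ · (−n+m+l−2)‼ · (n² + m² + l² − 2nm − 2nl − 2ml), where the three double-factorial arguments are odd integers (possibly negative) and ‼ denotes the extended double factorial. -/

import Mathlib

open MeasureTheory Real

/-- Physicists' Hermite polynomials: `H 0 x = 1`, `H 1 x = 2x`,
`H (n+1) x = 2x * H n x - 2n * H (n-1) x`. -/
noncomputable def hermiteP : ℕ → ℝ → ℝ
  | 0, _ => 1
  | 1, x => 2 * x
  | n + 2, x => 2 * x * hermiteP (n + 1) x - 2 * ((n : ℝ) + 1) * hermiteP n x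

/-- Extended double factorial of an odd integer `a`:
`a‼ = 2^((a+1)/2) * Γ(a/2 + 1) / √π`. -/
noncomputable def ddfact (a : ℤ) : ℝ :=
  (2 : ℝ) ^ ((a + 1) / 2) * Real.Gamma ((a : ℝ) / 2 + 1) / Real.sqrt π

/-- `I n m l k = √(2/π) ∫ H_n(x) H_m(x) H_l(x) H_k(x) e^{-2x²} dx`. -/
noncomputable def I (n m l k : ℕ) : ℝ :=
  Real.sqrt (2 / π) *
    ∫ x : ℝ,
      hermiteP n x * hermiteP m x * hermiteP l x * hermiteP k x * Real.exp (-2 * x ^ 2)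

/-!
Under the centred Gaussian of variance `1/4` (density `√(2/π) e^{-2x²}`), integration by parts
gives Stein's identity `E[p'] = 4 E[X p]` for polynomials `p`. Since `H₁ = 2X`, it turns
`I n m l 1 = 2 E[X H_n H_m H_l]` into `n T(n-1,m,l) + m T(n,m-1,l) + l T(n,m,l-1)`, where
`T(a,b,c) = E[H_a H_b H_c]`. Combined with `H_{a+1} = 2X H_a - 2a H_{a-1}`, the same identity
yields a three-term recurrence for `T`, which together with the symmetry of `T` and
`T(0,0,0) = 1` determines it. The product `(a+b-c-1)‼ (a-b+c-1)‼ (-a+b+c-1)‼` (and `0` when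
`a+b+c` is odd) satisfies the same recurrence because `x‼ = x (x-2)‼` for every odd integer
`x`, negative ones included; the same rule collapses the final sum to the claimed product.
-/

open Polynomial

theorem integrable_eval_mul_exp_neg_mul_sq {b : ℝ} (hb : 0 < b) (p : ℝ[X]) :
    Integrable fun x : ℝ ↦ p.eval x * exp (-b * x ^ 2) := by
  induction p using Polynomial.induction_on' with
  | add p q hp hq =>
    simp only [eval_add, add_mul]
    exact hp.add hq
  | monomial n a =>
    have h := integrable_rpow_mul_exp_neg_mul_sq hb (s := n)
      (by linarith [n.cast_nonneg (α := ℝ)])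
    simpa only [eval_monomial, rpow_natCast, mul_assoc] using h.const_mul a

theorem integral_derivative_eval_mul_exp_neg_mul_sq {b : ℝ} (hb : 0 < b) (p : ℝ[X]) :
    ∫ x : ℝ, (derivative p).eval x * exp (-b * x ^ 2)
      = 2 * b * ∫ x : ℝ, (X * p).eval x * exp (-b * x ^ 2) := by
  have hderiv (x : ℝ) : HasDerivAt (fun y ↦ p.eval y * exp (-b * y ^ 2))
      ((derivative p).eval x * exp (-b * x ^ 2)
        - 2 * b * ((X * p).eval x * exp (-b * x ^ 2))) x := by
    have hexp : HasDerivAt (fun y ↦ exp (-b * y ^ 2)) (exp (-b * x ^ 2) * (-b * (2 * x))) x := by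
      simpa using ((hasDerivAt_pow 2 x).const_mul (-b)).exp
    refine ((p.hasDerivAt x).mul hexp).congr_deriv ?_
    simp only [eval_mul, eval_X]
    ring
  have hzero := integral_eq_zero_of_hasDerivAt_of_integrable hderiv
    ((integrable_eval_mul_exp_neg_mul_sq hb _).sub
      ((integrable_eval_mul_exp_neg_mul_sq hb _).const_mul _))
    (integrable_eval_mul_exp_neg_mul_sq hb p)
  rwa [integral_sub (integrable_eval_mul_exp_neg_mul_sq hb _)
    ((integrable_eval_mul_exp_neg_mul_sq hb _).const_mul _), integral_const_mul,
    sub_eq_zero] at hzero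

/-- Expectation under the centred Gaussian of variance `1/4`. -/
noncomputable def gaussianExpectation : ℝ[X] →ₗ[ℝ] ℝ where
  toFun p := √(2 / π) * ∫ x : ℝ, p.eval x * exp (-2 * x ^ 2)
  map_add' p q := by
    simp only [eval_add, add_mul]
    rw [integral_add (integrable_eval_mul_exp_neg_mul_sq two_pos p)
      (integrable_eval_mul_exp_neg_mul_sq two_pos q), mul_add]
  map_smul' r p := by
    simp only [eval_smul, smul_eq_mul, mul_assoc, integral_const_mul, RingHom.id_apply]
    ring

theorem gaussianExpectation_apply (p : ℝ[X]) :
    gaussianExpectation p = √(2 / π) * ∫ x : ℝ, p.eval x * exp (-2 * x ^ 2) := rfl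

theorem gaussianExpectation_one : gaussianExpectation 1 = 1 := by
  rw [gaussianExpectation_apply]
  simp only [eval_one, one_mul]
  rw [integral_gaussian, ← sqrt_mul (by positivity), div_mul_div_comm, mul_comm 2 π,
    div_self (by positivity), sqrt_one]

theorem gaussianExpectation_C_mul (r : ℝ) (p : ℝ[X]) :
    gaussianExpectation (C r * p) = r * gaussianExpectation p := by
  rw [← smul_eq_C_mul, map_smul, smul_eq_mul]

theorem gaussianExpectation_derivative (p : ℝ[X]) :
    gaussianExpectation (derivative p) = 4 * gaussianExpectation (X * p) := by
  rw [gaussianExpectation_apply, gaussianExpectation_apply,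
    integral_derivative_eval_mul_exp_neg_mul_sq two_pos]
  ring

noncomputable def physHermite : ℕ → ℝ[X]
  | 0 => 1
  | 1 => 2 * X
  | n + 2 => 2 * X * physHermite (n + 1) - C (2 * ((n : ℝ) + 1)) * physHermite n

theorem eval_physHermite (n : ℕ) (x : ℝ) : (physHermite n).eval x = hermiteP n x := by
  induction n, x using hermiteP.induct with
  | case1 x => simp [physHermite, hermiteP]
  | case2 x => simp [physHermite, hermiteP]
  | case3 n x ih₁ ih₂ => simp [physHermite, hermiteP, ih₁, ih₂]

theorem physHermite_succ (n : ℕ) :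
    physHermite (n + 1) = 2 * X * physHermite n - C (2 * (n : ℝ)) * physHermite (n - 1) := by
  cases n with
  | zero => simp [physHermite]
  | succ n => simp [physHermite]

theorem derivative_physHermite : ∀ n : ℕ,
    derivative (physHermite n) = C (2 * (n : ℝ)) * physHermite (n - 1)
  | 0 => by simp [physHermite]
  | 1 => by simp [physHermite, map_ofNat]
  | n + 2 => by
    have hrec := physHermite_succ n
    simp only [physHermite, derivative_sub, derivative_mul, derivative_C, derivative_X,
      derivative_ofNat, derivative_physHermite (n + 1), derivative_physHermite n]
    simp only [show n + 2 - 1 = n + 1 from rfl, Nat.add_sub_cancel, Nat.cast_add, Nat.cast_ofNat,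
      Nat.cast_one, map_mul, map_add, map_natCast, map_ofNat, map_one] at hrec ⊢
    linear_combination (-2 * ((n : ℝ[X]) + 1)) * hrec

noncomputable def hermiteTriple (a b c : ℕ) : ℝ :=
  gaussianExpectation (physHermite a * physHermite b * physHermite c)

theorem hermiteTriple_zero : hermiteTriple 0 0 0 = 1 := by
  simp [hermiteTriple, physHermite, gaussianExpectation_one]

theorem hermiteTriple_comm₁₂ (a b c : ℕ) : hermiteTriple a b c = hermiteTriple b a c := by
  rw [hermiteTriple, hermiteTriple, mul_comm (physHermite a)]

theorem hermiteTriple_comm₂₃ (a b c : ℕ) : hermiteTriple a b c = hermiteTriple a c b := by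
  rw [hermiteTriple, hermiteTriple, mul_right_comm]

theorem two_mul_gaussianExpectation_X_mul_hermite (a b c : ℕ) :
    2 * gaussianExpectation (X * (physHermite a * physHermite b * physHermite c))
      = a * hermiteTriple (a - 1) b c + b * hermiteTriple a (b - 1) c
        + c * hermiteTriple a b (c - 1) := by
  have hderiv : derivative (physHermite a * physHermite b * physHermite c)
      = C (2 * (a : ℝ)) * (physHermite (a - 1) * physHermite b * physHermite c)
        + C (2 * (b : ℝ)) * (physHermite a * physHermite (b - 1) * physHermite c)
        + C (2 * (c : ℝ)) * (physHermite a * physHermite b * physHermite (c - 1)) := by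
    simp only [derivative_mul, derivative_physHermite]
    ring
  have h := gaussianExpectation_derivative (physHermite a * physHermite b * physHermite c)
  simp only [hderiv, map_add, gaussianExpectation_C_mul] at h
  simp only [hermiteTriple]
  linarith

theorem hermiteTriple_succ (a b c : ℕ) :
    hermiteTriple (a + 1) b c
      = -a * hermiteTriple (a - 1) b c + b * hermiteTriple a (b - 1) c
        + c * hermiteTriple a b (c - 1) := by
  have h := two_mul_gaussianExpectation_X_mul_hermite a b c
  rw [hermiteTriple, physHermite_succ,
    show (2 * X * physHermite a - C (2 * (a : ℝ)) * physHermite (a - 1)) * physHermite b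
        * physHermite c
      = C 2 * (X * (physHermite a * physHermite b * physHermite c))
        - C (2 * (a : ℝ)) * (physHermite (a - 1) * physHermite b * physHermite c) by
      rw [map_ofNat]; ring,
    map_sub, gaussianExpectation_C_mul, gaussianExpectation_C_mul]
  simp only [hermiteTriple] at h ⊢
  linarith

theorem ddfact_eq_mul_ddfact_sub_two {a : ℤ} (ha : Odd a) : ddfact a = a * ddfact (a - 2) := by
  obtain ⟨k, rfl⟩ := ha
  have hk : ((2 * k + 1 : ℤ) : ℝ) / 2 ≠ 0 :=
    div_ne_zero (by exact_mod_cast (by omega : 2 * k + 1 ≠ 0)) two_ne_zero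
  rw [ddfact, ddfact, show (2 * k + 1 + 1) / 2 = k + 1 by omega,
    show (2 * k + 1 - 2 + 1) / 2 = k by omega, Real.Gamma_add_one hk, zpow_add_one₀ two_ne_zero]
  push_cast
  rw [show (2 * (k : ℝ) + 1 - 2) / 2 + 1 = (2 * k + 1) / 2 by ring]
  ring

theorem ddfact_neg_one : ddfact (-1) = 1 := by
  norm_num [ddfact, Real.Gamma_one_half_eq, (sqrt_pos.2 pi_pos).ne']

noncomputable def tripleDdfact (a b c : ℤ) : ℝ :=
  if Even (a + b + c) then
    ddfact (a + b - c - 1) * ddfact (a - b + c - 1) * ddfact (-a + b + c - 1)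
  else 0

theorem tripleDdfact_zero : tripleDdfact 0 0 0 = 1 := by
  simp [tripleDdfact, ddfact_neg_one]

theorem tripleDdfact_comm₁₂ (a b c : ℤ) : tripleDdfact a b c = tripleDdfact b a c := by
  simp only [tripleDdfact, add_comm a b]
  rw [show b + a - c - 1 = a + b - c - 1 by ring, show b - a + c - 1 = -a + b + c - 1 by ring,
    show -b + a + c - 1 = a - b + c - 1 by ring]
  ring_nf

theorem tripleDdfact_comm₂₃ (a b c : ℤ) : tripleDdfact a b c = tripleDdfact a c b := by
  simp only [tripleDdfact, add_right_comm a b c]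
  rw [show a + c - b - 1 = a - b + c - 1 by ring, show a - c + b - 1 = a + b - c - 1 by ring,
    show -a + c + b - 1 = -a + b + c - 1 by ring]
  ring_nf

theorem tripleDdfact_succ (a b c : ℤ) :
    tripleDdfact (a + 1) b c
      = -a * tripleDdfact (a - 1) b c + b * tripleDdfact a (b - 1) c
        + c * tripleDdfact a b (c - 1) := by
  simp only [tripleDdfact, show a + 1 + b + c = a + b + c + 1 by ring,
    show a - 1 + b + c = a + b + c - 1 by ring, show a + (b - 1) + c = a + b + c - 1 by ring,
    show a + b + (c - 1) = a + b + c - 1 by ring, Int.even_add_one, Int.even_sub_one]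
  rcases Int.even_or_odd (a + b + c) with h | h
  · simp [h]
  · obtain ⟨k, hk⟩ := h
    have hu := ddfact_eq_mul_ddfact_sub_two (a := a + b - c) ⟨k - c, by omega⟩
    have hv := ddfact_eq_mul_ddfact_sub_two (a := a - b + c) ⟨k - b, by omega⟩
    have hw := ddfact_eq_mul_ddfact_sub_two (a := -a + b + c) ⟨k - a, by omega⟩
    have h : ¬Even (a + b + c) := Int.not_even_iff_odd.2 ⟨k, hk⟩
    simp only [h, not_false_eq_true, if_true]
    -- `ring_nf` brings every `ddfact` argument to one normal form, so `hu`, `hv`, `hw` apply.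
    ring_nf at hu hv hw ⊢
    rw [hu, hv, hw]
    push_cast
    ring

theorem tripleDdfact_shift_sum {a b c : ℤ} (h : Odd (a + b + c)) :
    a * tripleDdfact (a - 1) b c + b * tripleDdfact a (b - 1) c + c * tripleDdfact a b (c - 1)
      = -(ddfact (a + b - c - 2) * ddfact (a - b + c - 2) * ddfact (-a + b + c - 2)
        * (a ^ 2 + b ^ 2 + c ^ 2 - 2 * a * b - 2 * a * c - 2 * b * c)) := by
  obtain ⟨k, hk⟩ := h
  have hu := ddfact_eq_mul_ddfact_sub_two (a := a + b - c) ⟨k - c, by omega⟩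
  have hv := ddfact_eq_mul_ddfact_sub_two (a := a - b + c) ⟨k - b, by omega⟩
  have hw := ddfact_eq_mul_ddfact_sub_two (a := -a + b + c) ⟨k - a, by omega⟩
  have heven : Even (a + b + c - 1) := ⟨k, by omega⟩
  simp only [tripleDdfact, show a - 1 + b + c = a + b + c - 1 by ring,
    show a + (b - 1) + c = a + b + c - 1 by ring,
    show a + b + (c - 1) = a + b + c - 1 by ring, heven, if_true]
  ring_nf at hu hv hw ⊢
  rw [hu, hv, hw]
  push_cast
  ring

theorem eq_of_tripleRecurrence {f g : ℕ → ℕ → ℕ → ℝ}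
    (hf : ∀ a b c, f (a + 1) b c = -a * f (a - 1) b c + b * f a (b - 1) c + c * f a b (c - 1))
    (hg : ∀ a b c, g (a + 1) b c = -a * g (a - 1) b c + b * g a (b - 1) c + c * g a b (c - 1))
    (hf₁₂ : ∀ a b c, f a b c = f b a c) (hf₂₃ : ∀ a b c, f a b c = f a c b)
    (hg₁₂ : ∀ a b c, g a b c = g b a c) (hg₂₃ : ∀ a b c, g a b c = g a c b)
    (h₀ : f 0 0 0 = g 0 0 0) : f = g := by
  suffices h : ∀ s a b c, a + b + c = s → f a b c = g a b c by
    funext a b c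
    exact h _ a b c rfl
  intro s
  induction s using Nat.strong_induction_on with
  | _ s ih =>
    have succ_left (a b c : ℕ) (hs : a + 1 + b + c = s) : f (a + 1) b c = g (a + 1) b c := by
      rw [hf, hg, ih _ (by omega) (a - 1) b c rfl, ih _ (by omega) a (b - 1) c rfl,
        ih _ (by omega) a b (c - 1) rfl]
    have succ_mid (b c : ℕ) (hs : b + 1 + c = s) : f 0 (b + 1) c = g 0 (b + 1) c := by
      rw [hf₁₂, hg₁₂]
      exact succ_left b 0 c (by omega)
    rintro (_ | a) (_ | b) (_ | c) hs
    · exact h₀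
    · rw [hf₂₃, hg₂₃]
      exact succ_mid c 0 (by omega)
    · exact succ_mid b 0 (by omega)
    · exact succ_mid b (c + 1) (by omega)
    all_goals exact succ_left a _ _ hs

theorem natCast_mul_apply_sub_one (a : ℕ) (φ : ℤ → ℝ) :
    (a : ℝ) * φ ((a - 1 : ℕ) : ℤ) = a * φ (a - 1) := by
  cases a <;> simp

theorem hermiteTriple_eq_tripleDdfact (a b c : ℕ) :
    hermiteTriple a b c = tripleDdfact a b c := by
  have h := eq_of_tripleRecurrence (g := fun a b c : ℕ ↦ tripleDdfact a b c)
    hermiteTriple_succ ?_ hermiteTriple_comm₁₂ hermiteTriple_comm₂₃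
    (fun a b c ↦ tripleDdfact_comm₁₂ a b c) (fun a b c ↦ tripleDdfact_comm₂₃ a b c)
    (by simp [hermiteTriple_zero, tripleDdfact_zero])
  · exact congr_fun (congr_fun (congr_fun h a) b) c
  · intro a b c
    simp only [neg_mul, natCast_mul_apply_sub_one a (tripleDdfact · b c),
      natCast_mul_apply_sub_one b (tripleDdfact a · c),
      natCast_mul_apply_sub_one c (tripleDdfact a b ·), Nat.cast_add, Nat.cast_one,
      tripleDdfact_succ, Int.cast_natCast]

theorem I_eq_gaussianExpectation (n m l k : ℕ) :
    I n m l k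
      = gaussianExpectation (physHermite n * physHermite m * physHermite l * physHermite k) := by
  simp [I, gaussianExpectation_apply, eval_physHermite]

theorem I4_one_eq (n m l : ℕ) (h : Odd (n + m + l)) :
    I n m l 1 =
      -(ddfact ((n : ℤ) + m - l - 2) * ddfact ((n : ℤ) - m + l - 2) *
          ddfact (-(n : ℤ) + m + l - 2) *
        ((n : ℝ) ^ 2 + (m : ℝ) ^ 2 + (l : ℝ) ^ 2 - 2 * n * m - 2 * n * l - 2 * m * l)) := by
  have hH₁ : physHermite n * physHermite m * physHermite l * physHermite 1
      = C 2 * (X * (physHermite n * physHermite m * physHermite l)) := by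
    rw [physHermite, map_ofNat]
    ring
  have hodd : Odd ((n : ℤ) + m + l) := by exact_mod_cast h.natCast (R := ℤ)
  rw [I_eq_gaussianExpectation, hH₁, gaussianExpectation_C_mul,
    two_mul_gaussianExpectation_X_mul_hermite]
  simp only [hermiteTriple_eq_tripleDdfact, natCast_mul_apply_sub_one n (tripleDdfact · m l),
    natCast_mul_apply_sub_one m (tripleDdfact n · l),
    natCast_mul_apply_sub_one l (tripleDdfact n m ·)]
  exact_mod_cast tripleDdfact_shift_sum hodd
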